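/- Let C(n,2) be the maximum cardinality of a family of directed Hamilton paths (well-oriented: every vertex has in-degree and out-degree at most 1) in the complete symmetric digraph on n vertices such that the union of any two members contains a directed 2-cycle (a pair of oppositely oriented arcs between the same two vertices). Then C(n,2) ≥ 2^{⌊n/2⌋}. -/
import Mathlib


/-- The arc set of the directed Hamilton path visiting `τ 0, τ 1, …, τ (n-1)` in order,
in the complete symmetric digraph on `Fin n`. -/
def dirArcs (n : ℕ) (τ : Equiv.Perm (Fin n)) : Set (Fin n × Fin n) :=
  {a | ∃ i : ℕ, ∃ h : i + 1 < n, a = (τ ⟨i, by omega⟩, τ ⟨i + 1, h⟩)}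

/-- The union of the directed Hamilton paths `τ` and `φ` contains a directed 2-cycle,
i.e. a pair of oppositely oriented arcs between the same two vertices. -/
def TwoCycleInUnion (n : ℕ) (τ φ : Equiv.Perm (Fin n)) : Prop :=
  ∃ u v : Fin n, u ≠ v ∧
    (u, v) ∈ dirArcs n τ ∪ dirArcs n φ ∧ (v, u) ∈ dirArcs n τ ∪ dirArcs n φ

def permFun (n : ℕ) (x : Fin (n / 2) → Bool) (j : Fin n) : Fin n :=
  if h : (j : ℕ) / 2 < n / 2 then
    if x ⟨(j : ℕ) / 2, h⟩ then j
    else ⟨2 * ((j : ℕ) / 2) + 1 - (j : ℕ) % 2, by omega⟩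
  else j

lemma permFun_true (n : ℕ) (x : Fin (n / 2) → Bool) (j : Fin n)
    (h1 : (j : ℕ) / 2 < n / 2) (h2 : x ⟨(j : ℕ) / 2, h1⟩ = true) :
    permFun n x j = j := by
  unfold permFun; rw [dif_pos h1, if_pos h2]

lemma permFun_false (n : ℕ) (x : Fin (n / 2) → Bool) (j : Fin n)
    (h1 : (j : ℕ) / 2 < n / 2) (h2 : x ⟨(j : ℕ) / 2, h1⟩ = false) :
    permFun n x j = ⟨2 * ((j : ℕ) / 2) + 1 - (j : ℕ) % 2, by omega⟩ := by
  unfold permFun; rw [dif_pos h1, if_neg (by simp [h2])]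

lemma permFun_out (n : ℕ) (x : Fin (n / 2) → Bool) (j : Fin n)
    (h1 : ¬ (j : ℕ) / 2 < n / 2) : permFun n x j = j := by
  unfold permFun; rw [dif_neg h1]

lemma permFun_involutive (n : ℕ) (x : Fin (n / 2) → Bool) :
    Function.Involutive (permFun n x) := by
  intro j
  by_cases h1 : (j : ℕ) / 2 < n / 2
  · by_cases h2 : x ⟨(j : ℕ) / 2, h1⟩ = true
    · rw [permFun_true n x j h1 h2, permFun_true n x j h1 h2]
    · have h2' : x ⟨(j : ℕ) / 2, h1⟩ = false := by simpa using h2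
      rw [permFun_false n x j h1 h2']
      set j' : Fin n := ⟨2 * ((j : ℕ) / 2) + 1 - (j : ℕ) % 2, by omega⟩ with hj'
      have hv : (j' : ℕ) = 2 * ((j : ℕ) / 2) + 1 - (j : ℕ) % 2 := rfl
      have hd : (j' : ℕ) / 2 = (j : ℕ) / 2 := by omega
      have h1' : (j' : ℕ) / 2 < n / 2 := by omega
      have h2'' : x ⟨(j' : ℕ) / 2, h1'⟩ = false := by
        rw [show (⟨(j' : ℕ) / 2, h1'⟩ : Fin (n / 2)) = ⟨(j : ℕ) / 2, h1⟩ from Fin.ext hd]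
        exact h2'
      rw [permFun_false n x j' h1' h2'']
      apply Fin.ext
      show 2 * ((j' : ℕ) / 2) + 1 - (j' : ℕ) % 2 = (j : ℕ)
      omega
  · rw [permFun_out n x j h1, permFun_out n x j h1]

def pathPerm (n : ℕ) (x : Fin (n / 2) → Bool) : Equiv.Perm (Fin n) :=
  (permFun_involutive n x).toPerm

lemma pathPerm_even (n : ℕ) (x : Fin (n / 2) → Bool) (i : ℕ) (hi : i < n / 2) :
    pathPerm n x ⟨2 * i, by omega⟩ =
      if x ⟨i, hi⟩ then (⟨2 * i, by omega⟩ : Fin n) else ⟨2 * i + 1, by omega⟩ := by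
  have h1 : ((⟨2 * i, by omega⟩ : Fin n) : ℕ) / 2 < n / 2 := by simp only [Fin.val_mk]; omega
  have hx : (⟨((⟨2 * i, by omega⟩ : Fin n) : ℕ) / 2, h1⟩ : Fin (n / 2)) = ⟨i, hi⟩ :=
    Fin.ext (by simp only [Fin.val_mk]; omega)
  by_cases h : x ⟨i, hi⟩ = true
  · rw [if_pos h]
    exact permFun_true n x _ h1 (by rw [hx]; exact h)
  · have h' : x ⟨i, hi⟩ = false := by simpa using h
    rw [if_neg h]
    rw [show pathPerm n x ⟨2 * i, by omega⟩ = _ from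
      permFun_false n x _ h1 (by rw [hx]; exact h')]
    apply Fin.ext
    simp only [Fin.val_mk]
    omega

lemma pathPerm_odd (n : ℕ) (x : Fin (n / 2) → Bool) (i : ℕ) (hi : i < n / 2) :
    pathPerm n x ⟨2 * i + 1, by omega⟩ =
      if x ⟨i, hi⟩ then (⟨2 * i + 1, by omega⟩ : Fin n) else ⟨2 * i, by omega⟩ := by
  have h1 : ((⟨2 * i + 1, by omega⟩ : Fin n) : ℕ) / 2 < n / 2 := by simp only [Fin.val_mk]; omega
  have hx : (⟨((⟨2 * i + 1, by omega⟩ : Fin n) : ℕ) / 2, h1⟩ : Fin (n / 2)) = ⟨i, hi⟩ :=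
    Fin.ext (by simp only [Fin.val_mk]; omega)
  by_cases h : x ⟨i, hi⟩ = true
  · rw [if_pos h]
    exact permFun_true n x _ h1 (by rw [hx]; exact h)
  · have h' : x ⟨i, hi⟩ = false := by simpa using h
    rw [if_neg h]
    rw [show pathPerm n x ⟨2 * i + 1, by omega⟩ = _ from
      permFun_false n x _ h1 (by rw [hx]; exact h')]
    apply Fin.ext
    simp only [Fin.val_mk]
    omega

lemma arc_mem (n : ℕ) (x : Fin (n / 2) → Bool) (i : ℕ) (hi : i < n / 2) :
    (if x ⟨i, hi⟩ then ((⟨2 * i, by omega⟩ : Fin n), (⟨2 * i + 1, by omega⟩ : Fin n))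
      else ((⟨2 * i + 1, by omega⟩ : Fin n), (⟨2 * i, by omega⟩ : Fin n)))
      ∈ dirArcs n (pathPerm n x) := by
  refine ⟨2 * i, by omega, ?_⟩
  rw [pathPerm_even n x i hi, pathPerm_odd n x i hi]
  split_ifs <;> rfl

lemma pathPerm_inj (n : ℕ) : Function.Injective (pathPerm n) := by
  intro x y h
  funext i
  by_contra hne
  have h1 := pathPerm_even n x i.1 i.2
  have h2 := pathPerm_even n y i.1 i.2
  rw [h] at h1
  rw [show (⟨i.1, i.2⟩ : Fin (n / 2)) = i from rfl] at h1 h2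
  rw [h1] at h2
  rcases Bool.eq_false_or_eq_true (x i) with hx | hx <;>
    rcases Bool.eq_false_or_eq_true (y i) with hy | hy <;>
      simp [hx, hy, Fin.ext_iff] at h2 hne

/-- `C(n,2) ≥ 2^⌊n/2⌋` : there is a family of at least `2^⌊n/2⌋` directed Hamilton paths
of the complete symmetric digraph on `n` vertices such that the union of any two of them
contains a directed 2-cycle. -/
theorem two_cycle_family_lower_bound (n : ℕ) :
    ∃ F : Finset (Equiv.Perm (Fin n)),
      2 ^ (n / 2) ≤ F.card ∧
      ∀ τ ∈ F, ∀ φ ∈ F, τ ≠ φ → TwoCycleInUnion n τ φ := by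
  refine ⟨Finset.image (pathPerm n) Finset.univ, ?_, ?_⟩
  · rw [Finset.card_image_of_injective _ (pathPerm_inj n), Finset.card_univ]
    simp
  · intro τ hτ φ hφ hne
    simp only [Finset.mem_image, Finset.mem_univ, true_and] at hτ hφ
    obtain ⟨x, rfl⟩ := hτ
    obtain ⟨y, rfl⟩ := hφ
    have hxy : x ≠ y := fun h => hne (by rw [h])
    obtain ⟨i, hi⟩ : ∃ i, x i ≠ y i := by
      by_contra h
      push_neg at h
      exact hxy (funext h)
    have hx := arc_mem n x i.1 i.2
    have hy := arc_mem n y i.1 i.2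
    rw [show (⟨i.1, i.2⟩ : Fin (n / 2)) = i from rfl] at hx hy
    refine ⟨⟨2 * i.1, by omega⟩, ⟨2 * i.1 + 1, by omega⟩, by simp [Fin.ext_iff], ?_, ?_⟩ <;>
      rcases Bool.eq_false_or_eq_true (x i) with h1 | h1 <;>
        rcases Bool.eq_false_or_eq_true (y i) with h2 | h2 <;>
          simp only [h1, h2, if_true, if_false, Bool.false_eq_true, ne_eq,
            not_true_eq_false, not_false_eq_true] at hx hy hi <;>
        first
          | exact absurd rfl hi
          | exact Or.inl hx
          | exact Or.inr hy
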